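/- arXiv:0908.0966 — 7 statements merged into one kernel-verified Lean document; each statement's English description precedes it below -/
import Mathlib

section
/- Let X = {(z₁,z₂) ∈ ℂ² : z₁z₂ + 1 ≠ 0} and define f : X → ℝ² by f(z₁,z₂) = ((|z₁|² − |z₂|²)/2, log |z₁z₂ + 1|). Then f is infinitely differentiable on X (as a map from the open set X of ℂ² ≅ ℝ⁴ to ℝ²), and for p ∈ X the Fréchet derivative Df_p : ℂ² → ℝ² (an ℝ-linear map on ℂ² ≅ ℝ⁴) is surjective if and only if p ≠ (0,0). Hence (0,0) is the unique critical point of the Lagrangian fibration f. -/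
/-- The complement of the nodal curve `z₁z₂ + 1 = 0` in `ℂ²`. -/
def X0 : Set (ℂ × ℂ) := {z | z.1 * z.2 + 1 ≠ 0}

/-- The focus-focus (nodal) Lagrangian fibration
`f(z₁,z₂) = ((|z₁|² − |z₂|²)/2, log |z₁z₂ + 1|)`. -/
noncomputable def f0 (z : ℂ × ℂ) : ℝ × ℝ :=
  ((‖z.1‖ ^ 2 - ‖z.2‖ ^ 2) / 2,
    Real.log (‖z.1 * z.2 + 1‖))

open Complex ContinuousLinearMap

lemma f0_eq : f0 = fun z : ℂ × ℂ =>
    ((2⁻¹ : ℝ) • (‖z.1‖ ^ 2 - ‖z.2‖ ^ 2),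
      (2⁻¹ : ℝ) • Real.log (‖z.1 * z.2 + 1‖ ^ 2)) := by
  funext z
  simp only [f0, Real.log_pow, smul_eq_mul, Prod.mk.injEq]
  constructor <;> ring

lemma cinner (a b : ℂ) : (inner ℝ a b : ℝ) = (starRingEnd ℂ a * b).re := by
  rw [real_inner_eq_re_inner ℂ, RCLike.inner_apply, mul_comm]; rfl

lemma hasFDerivAt_f0 (p : ℂ × ℂ) (hp : p.1 * p.2 + 1 ≠ 0) :
    HasFDerivAt f0
      (((2⁻¹ : ℝ) • ((2 : ℕ) • (innerSL ℝ p.1).comp (fst ℝ ℂ ℂ) -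
          (2 : ℕ) • (innerSL ℝ p.2).comp (snd ℝ ℂ ℂ))).prod
        ((2⁻¹ : ℝ) • ((‖p.1 * p.2 + 1‖ ^ 2)⁻¹ •
          ((2 : ℕ) • (innerSL ℝ (p.1 * p.2 + 1)).comp
            (p.1 • snd ℝ ℂ ℂ + p.2 • fst ℝ ℂ ℂ))))) p := by
  rw [f0_eq]
  have h1 : HasFDerivAt (fun z : ℂ × ℂ => ‖z.1‖ ^ 2)
      ((2 : ℕ) • (innerSL ℝ p.1).comp (fst ℝ ℂ ℂ)) p := hasFDerivAt_fst.norm_sq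
  have h2 : HasFDerivAt (fun z : ℂ × ℂ => ‖z.2‖ ^ 2)
      ((2 : ℕ) • (innerSL ℝ p.2).comp (snd ℝ ℂ ℂ)) p := hasFDerivAt_snd.norm_sq
  have hw : HasFDerivAt (fun z : ℂ × ℂ => z.1 * z.2 + 1)
      (p.1 • snd ℝ ℂ ℂ + p.2 • fst ℝ ℂ ℂ) p :=
    (hasFDerivAt_fst.mul hasFDerivAt_snd).add_const 1
  have hnw : HasFDerivAt (fun z : ℂ × ℂ => ‖z.1 * z.2 + 1‖ ^ 2)
      ((2 : ℕ) • (innerSL ℝ (p.1 * p.2 + 1)).comp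
        (p.1 • snd ℝ ℂ ℂ + p.2 • fst ℝ ℂ ℂ)) p := hw.norm_sq
  have hne : ‖p.1 * p.2 + 1‖ ^ 2 ≠ 0 := pow_ne_zero 2 (norm_ne_zero_iff.mpr hp)
  have hlog : HasFDerivAt (fun z : ℂ × ℂ => Real.log (‖z.1 * z.2 + 1‖ ^ 2))
      ((‖p.1 * p.2 + 1‖ ^ 2)⁻¹ •
        ((2 : ℕ) • (innerSL ℝ (p.1 * p.2 + 1)).comp
          (p.1 • snd ℝ ℂ ℂ + p.2 • fst ℝ ℂ ℂ))) p :=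
    by have := (Real.hasDerivAt_log hne).comp_hasFDerivAt p hnw; exact this
  exact HasFDerivAt.prodMk ((h1.sub h2).const_smul (2⁻¹ : ℝ)) (hlog.const_smul (2⁻¹ : ℝ))

lemma fderiv_f0_apply (p : ℂ × ℂ) (hp : p.1 * p.2 + 1 ≠ 0) (h : ℂ × ℂ) :
    fderiv ℝ f0 p h =
      ((starRingEnd ℂ p.1 * h.1).re - (starRingEnd ℂ p.2 * h.2).re,
        (‖p.1 * p.2 + 1‖ ^ 2)⁻¹ *
          (starRingEnd ℂ (p.1 * p.2 + 1) * (p.1 * h.2 + p.2 * h.1)).re) := by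
  rw [(hasFDerivAt_f0 p hp).fderiv]
  simp only [prod_apply, coe_smul', Pi.smul_apply, ContinuousLinearMap.sub_apply,
    ContinuousLinearMap.smul_apply, coe_comp', Function.comp_apply, coe_fst', coe_snd',
    ContinuousLinearMap.add_apply, innerSL_apply_apply, cinner, smul_eq_mul, nsmul_eq_mul,
    Nat.cast_ofNat, Prod.mk.injEq]
  constructor
  · ring
  · rw [map_add]; ring

/-- `f0` is smooth on `X0`, and its Fréchet derivative at `p ∈ X0` is surjective
iff `p ≠ (0,0)`: the origin is the unique critical point. -/
theorem stmt1 :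
    ContDiffOn ℝ (⊤ : ℕ∞) f0 X0 ∧
    ∀ p ∈ X0, (Function.Surjective (fderiv ℝ f0 p) ↔ p ≠ 0) := by
  constructor
  · rw [f0_eq]
    apply ContDiffOn.prodMk
    · exact (((contDiff_fst.norm_sq ℝ).sub (contDiff_snd.norm_sq ℝ)).const_smul
        (2⁻¹ : ℝ)).contDiffOn
    · intro p hp
      have hne : ‖p.1 * p.2 + 1‖ ^ 2 ≠ 0 := pow_ne_zero 2 (norm_ne_zero_iff.mpr hp)
      have hw : ContDiffAt ℝ (⊤ : ℕ∞) (fun z : ℂ × ℂ => ‖z.1 * z.2 + 1‖ ^ 2) p :=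
        (((contDiff_fst.mul contDiff_snd).add contDiff_const).norm_sq ℝ).contDiffAt
      exact (((Real.contDiffAt_log.mpr hne).comp p hw).const_smul
        (2⁻¹ : ℝ)).contDiffWithinAt
  · intro p hp
    have hp' : p.1 * p.2 + 1 ≠ 0 := hp
    constructor
    · intro hs
      rintro rfl
      obtain ⟨h, hh⟩ := hs (1, 0)
      rw [fderiv_f0_apply 0 (by norm_num)] at hh
      simp at hh
    · intro hne
      have hpn : p.1 ≠ 0 ∨ p.2 ≠ 0 := by
        by_contra hc
        push_neg at hc
        exact hne (Prod.ext hc.1 hc.2)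
      have hs : (0 : ℝ) < ‖p.1‖ ^ 2 + ‖p.2‖ ^ 2 := by
        rcases hpn with h | h
        · have h1 : 0 < ‖p.1‖ := norm_pos_iff.mpr h
          nlinarith [sq_nonneg ‖p.2‖]
        · have h1 : 0 < ‖p.2‖ := norm_pos_iff.mpr h
          nlinarith [sq_nonneg ‖p.1‖]
      set s : ℝ := ‖p.1‖ ^ 2 + ‖p.2‖ ^ 2 with hsdef
      set w : ℂ := p.1 * p.2 + 1 with hwdef
      have hnw : ‖w‖ ^ 2 ≠ 0 := pow_ne_zero 2 (norm_ne_zero_iff.mpr hp')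
      have hu : fderiv ℝ f0 p (p.1, -p.2) = (s, 0) := by
        rw [fderiv_f0_apply p hp']
        simp only [hsdef, hwdef, Prod.mk.injEq, Complex.sq_norm]
        constructor
        · simp [Complex.normSq_apply, Complex.mul_re]
          ring
        · have : (starRingEnd ℂ (p.1 * p.2 + 1) * (p.1 * -p.2 + p.2 * p.1)).re = 0 := by
            ring_nf
            simp
          rw [this, mul_zero]
      have hv : fderiv ℝ f0 p (w * starRingEnd ℂ p.2, w * starRingEnd ℂ p.1) = (0, s) := by
        rw [fderiv_f0_apply p hp']
        simp only [hsdef, hwdef, Prod.mk.injEq]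
        constructor
        · have : starRingEnd ℂ p.1 * ((p.1 * p.2 + 1) * starRingEnd ℂ p.2) =
              starRingEnd ℂ p.2 * ((p.1 * p.2 + 1) * starRingEnd ℂ p.1) := by ring
          rw [this, sub_self]
        · have hre : (starRingEnd ℂ (p.1 * p.2 + 1) *
              (p.1 * ((p.1 * p.2 + 1) * starRingEnd ℂ p.1) +
               p.2 * ((p.1 * p.2 + 1) * starRingEnd ℂ p.2))).re =
              ‖p.1 * p.2 + 1‖ ^ 2 * (‖p.1‖ ^ 2 + ‖p.2‖ ^ 2) := by
            have : starRingEnd ℂ (p.1 * p.2 + 1) *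
                (p.1 * ((p.1 * p.2 + 1) * starRingEnd ℂ p.1) +
                 p.2 * ((p.1 * p.2 + 1) * starRingEnd ℂ p.2)) =
                ((p.1 * p.2 + 1) * starRingEnd ℂ (p.1 * p.2 + 1)) *
                  (p.1 * starRingEnd ℂ p.1 + p.2 * starRingEnd ℂ p.2) := by ring
            rw [this, Complex.mul_conj, Complex.mul_conj, Complex.mul_conj, ← Complex.ofReal_add,
              ← Complex.ofReal_mul, Complex.ofReal_re,
              Complex.sq_norm, Complex.sq_norm, Complex.sq_norm]
          rw [hre]
          exact inv_mul_cancel_left₀ hnw _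
      intro q
      refine ⟨(q.1 / s) • (p.1, -p.2) +
        (q.2 / s) • (w * starRingEnd ℂ p.2, w * starRingEnd ℂ p.1), ?_⟩
      rw [map_add, map_smul, map_smul, hu, hv, Prod.smul_mk, Prod.smul_mk, Prod.mk_add_mk,
        smul_eq_mul, smul_eq_mul, smul_eq_mul, smul_eq_mul]
      have hs' : s ≠ 0 := ne_of_gt hs
      field_simp
      ext <;> simp [hs']
end

section
/- The open subset {(x₁,x₂,x₃) ∈ ℝ³ : 1 + x₁x₂x₃ ≠ 0} of ℝ³ has exactly 5 connected components. (This set is the fixed locus in X = ℂ³ − {1 + z₁z₂z₃ = 0} of the anti-symplectic involution given by complex conjugation.) -/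
open Set

namespace Stmt10Aux

noncomputable section

abbrev P (x : ℝ × ℝ × ℝ) : ℝ := x.1 * x.2.1 * x.2.2

def S : Fin 5 → Set (ℝ × ℝ × ℝ)
  | 0 => {x | -1 < P x}
  | 1 => {x | P x < -1 ∧ x.1 < 0 ∧ 0 < x.2.1 ∧ 0 < x.2.2}
  | 2 => {x | P x < -1 ∧ 0 < x.1 ∧ x.2.1 < 0 ∧ 0 < x.2.2}
  | 3 => {x | P x < -1 ∧ 0 < x.1 ∧ 0 < x.2.1 ∧ x.2.2 < 0}
  | 4 => {x | P x < -1 ∧ x.1 < 0 ∧ x.2.1 < 0 ∧ x.2.2 < 0}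

lemma contP : Continuous P := by fun_prop

lemma isOpen_S (i : Fin 5) : IsOpen (S i) := by
  fin_cases i
  · exact isOpen_lt continuous_const contP
  all_goals
    refine (isOpen_lt contP continuous_const).inter (IsOpen.inter ?_ (IsOpen.inter ?_ ?_)) <;>
      first
        | exact isOpen_lt continuous_fst continuous_const
        | exact isOpen_lt continuous_const continuous_fst
        | exact isOpen_lt (continuous_fst.comp continuous_snd) continuous_const
        | exact isOpen_lt continuous_const (continuous_fst.comp continuous_snd)
        | exact isOpen_lt (continuous_snd.comp continuous_snd) continuous_const
        | exact isOpen_lt continuous_const (continuous_snd.comp continuous_snd)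

lemma S_disjoint {i j : Fin 5} {x : ℝ × ℝ × ℝ} (hi : x ∈ S i) (hj : x ∈ S j) : i = j := by
  fin_cases i <;> fin_cases j <;> simp only [S, mem_setOf_eq] at hi hj <;>
    first
      | rfl
      | (exfalso; obtain ⟨h1, h2, h3, h4⟩ := hi; linarith [hj])
      | (exfalso; obtain ⟨h1, h2, h3, h4⟩ := hj; linarith [hi])
      | (exfalso; obtain ⟨h1, h2, h3, h4⟩ := hi; obtain ⟨g1, g2, g3, g4⟩ := hj; linarith)

lemma S0_pathConnected : IsPathConnected (S 0) := by
  have h0 : (0 : ℝ × ℝ × ℝ) ∈ S 0 := by simp [S, P]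
  have : StarConvex ℝ (0 : ℝ × ℝ × ℝ) (S 0) := by
    intro y hy a b ha hb hab
    simp only [S, mem_setOf_eq, smul_zero, zero_add, P] at hy ⊢
    have hb1 : b ≤ 1 := by linarith
    have : (b • y).1 * (b • y).2.1 * (b • y).2.2 = b ^ 3 * (y.1 * y.2.1 * y.2.2) := by
      simp [Prod.smul_fst, Prod.smul_snd, smul_eq_mul]; ring
    rw [this]
    rcases le_or_gt 0 (y.1 * y.2.1 * y.2.2) with h | h
    · have := mul_nonneg (pow_nonneg hb 3) h; linarith
    · have h3 : b ^ 3 ≤ 1 := pow_le_one₀ hb hb1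
      have := mul_le_mul_of_nonpos_right h3 h.le
      linarith
  rw [isPathConnected_iff_pathConnectedSpace]
  have := this.contractibleSpace ⟨0, h0⟩
  infer_instance

def H : Set (ℝ × ℝ × ℝ) := {u | 0 < u.1 + u.2.1 + u.2.2}

lemma H_pathConnected : IsPathConnected H := by
  have hc : Convex ℝ H := by
    intro u hu v hv a b ha hb hab
    simp only [H, mem_setOf_eq, Prod.smul_fst, Prod.smul_snd, Prod.fst_add, Prod.snd_add,
      smul_eq_mul] at hu hv ⊢
    rcases lt_or_ge 0 a with hpa | hpa
    · nlinarith [mul_pos hpa hu, mul_nonneg hb hv.le]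
    · have ha0 : a = 0 := le_antisymm hpa ha
      have hb1 : b = 1 := by linarith
      rw [ha0, hb1]; ring_nf; linarith
  exact hc.isPathConnected ⟨(1, 1, 1), by norm_num [H]⟩

lemma S_pathConnected (i : Fin 5) : IsPathConnected (S i) := by
  fin_cases i
  · exact S0_pathConnected
  · -- g : (-e^u, e^v, e^w)
    have hg : Continuous fun u : ℝ × ℝ × ℝ =>
        ((-Real.exp u.1, Real.exp u.2.1, Real.exp u.2.2) : ℝ × ℝ × ℝ) := by fun_prop
    have himg : (fun u : ℝ × ℝ × ℝ =>
        ((-Real.exp u.1, Real.exp u.2.1, Real.exp u.2.2) : ℝ × ℝ × ℝ)) '' H = S 1 := by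
      ext x
      constructor
      · rintro ⟨u, hu, rfl⟩
        simp only [S, mem_setOf_eq, P]
        refine ⟨?_, neg_lt_zero.2 (Real.exp_pos _), Real.exp_pos _, Real.exp_pos _⟩
        have : -Real.exp u.1 * Real.exp u.2.1 * Real.exp u.2.2
            = -Real.exp (u.1 + u.2.1 + u.2.2) := by
          rw [Real.exp_add, Real.exp_add]; ring
        rw [this]
        have h1 : (1:ℝ) < Real.exp (u.1 + u.2.1 + u.2.2) := Real.one_lt_exp_iff.2 hu
        linarith
      · rintro ⟨h1, h2, h3, h4⟩
        refine ⟨(Real.log (-x.1), Real.log x.2.1, Real.log x.2.2), ?_, ?_⟩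
        · simp only [H, mem_setOf_eq]
          have hx1 : (0:ℝ) < -x.1 := by linarith
          rw [← Real.log_mul (by positivity) (by positivity),
            ← Real.log_mul (by positivity) (by positivity)]
          apply Real.log_pos
          simp only [P] at h1; nlinarith
        · have hx1 : (0:ℝ) < -x.1 := by linarith
          dsimp only
          rw [Real.exp_log hx1, Real.exp_log h3, Real.exp_log h4, neg_neg]
    show IsPathConnected (S 1)
    rw [← himg]
    exact H_pathConnected.image hg
  · have hg : Continuous fun u : ℝ × ℝ × ℝ =>
        ((Real.exp u.1, -Real.exp u.2.1, Real.exp u.2.2) : ℝ × ℝ × ℝ) := by fun_prop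
    have himg : (fun u : ℝ × ℝ × ℝ =>
        ((Real.exp u.1, -Real.exp u.2.1, Real.exp u.2.2) : ℝ × ℝ × ℝ)) '' H = S 2 := by
      ext x
      constructor
      · rintro ⟨u, hu, rfl⟩
        simp only [S, mem_setOf_eq, P]
        refine ⟨?_, Real.exp_pos _, neg_lt_zero.2 (Real.exp_pos _), Real.exp_pos _⟩
        have : Real.exp u.1 * -Real.exp u.2.1 * Real.exp u.2.2
            = -Real.exp (u.1 + u.2.1 + u.2.2) := by
          rw [Real.exp_add, Real.exp_add]; ring
        rw [this]
        have h1 : (1:ℝ) < Real.exp (u.1 + u.2.1 + u.2.2) := Real.one_lt_exp_iff.2 hu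
        linarith
      · rintro ⟨h1, h2, h3, h4⟩
        refine ⟨(Real.log x.1, Real.log (-x.2.1), Real.log x.2.2), ?_, ?_⟩
        · simp only [H, mem_setOf_eq]
          have hx1 : (0:ℝ) < -x.2.1 := by linarith
          rw [← Real.log_mul (by positivity) (by positivity),
            ← Real.log_mul (by positivity) (by positivity)]
          apply Real.log_pos
          simp only [P] at h1; nlinarith
        · have hx1 : (0:ℝ) < -x.2.1 := by linarith
          dsimp only
          rw [Real.exp_log hx1, Real.exp_log h2, Real.exp_log h4, neg_neg]
    show IsPathConnected (S 2)
    rw [← himg]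
    exact H_pathConnected.image hg
  · have hg : Continuous fun u : ℝ × ℝ × ℝ =>
        ((Real.exp u.1, Real.exp u.2.1, -Real.exp u.2.2) : ℝ × ℝ × ℝ) := by fun_prop
    have himg : (fun u : ℝ × ℝ × ℝ =>
        ((Real.exp u.1, Real.exp u.2.1, -Real.exp u.2.2) : ℝ × ℝ × ℝ)) '' H = S 3 := by
      ext x
      constructor
      · rintro ⟨u, hu, rfl⟩
        simp only [S, mem_setOf_eq, P]
        refine ⟨?_, Real.exp_pos _, Real.exp_pos _, neg_lt_zero.2 (Real.exp_pos _)⟩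
        have : Real.exp u.1 * Real.exp u.2.1 * -Real.exp u.2.2
            = -Real.exp (u.1 + u.2.1 + u.2.2) := by
          rw [Real.exp_add, Real.exp_add]; ring
        rw [this]
        have h1 : (1:ℝ) < Real.exp (u.1 + u.2.1 + u.2.2) := Real.one_lt_exp_iff.2 hu
        linarith
      · rintro ⟨h1, h2, h3, h4⟩
        refine ⟨(Real.log x.1, Real.log x.2.1, Real.log (-x.2.2)), ?_, ?_⟩
        · simp only [H, mem_setOf_eq]
          have hx1 : (0:ℝ) < -x.2.2 := by linarith
          rw [← Real.log_mul (by positivity) (by positivity),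
            ← Real.log_mul (by positivity) (by positivity)]
          apply Real.log_pos
          simp only [P] at h1; nlinarith
        · have hx1 : (0:ℝ) < -x.2.2 := by linarith
          dsimp only
          rw [Real.exp_log hx1, Real.exp_log h2, Real.exp_log h3, neg_neg]
    show IsPathConnected (S 3)
    rw [← himg]
    exact H_pathConnected.image hg
  · have hg : Continuous fun u : ℝ × ℝ × ℝ =>
        ((-Real.exp u.1, -Real.exp u.2.1, -Real.exp u.2.2) : ℝ × ℝ × ℝ) := by fun_prop
    have himg : (fun u : ℝ × ℝ × ℝ =>
        ((-Real.exp u.1, -Real.exp u.2.1, -Real.exp u.2.2) : ℝ × ℝ × ℝ)) '' H = S 4 := by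
      ext x
      constructor
      · rintro ⟨u, hu, rfl⟩
        simp only [S, mem_setOf_eq, P]
        refine ⟨?_, neg_lt_zero.2 (Real.exp_pos _), neg_lt_zero.2 (Real.exp_pos _), neg_lt_zero.2 (Real.exp_pos _)⟩
        have : -Real.exp u.1 * -Real.exp u.2.1 * -Real.exp u.2.2
            = -Real.exp (u.1 + u.2.1 + u.2.2) := by
          rw [Real.exp_add, Real.exp_add]; ring
        rw [this]
        have h1 : (1:ℝ) < Real.exp (u.1 + u.2.1 + u.2.2) := Real.one_lt_exp_iff.2 hu
        linarith
      · rintro ⟨h1, h2, h3, h4⟩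
        refine ⟨(Real.log (-x.1), Real.log (-x.2.1), Real.log (-x.2.2)), ?_, ?_⟩
        · simp only [H, mem_setOf_eq]
          have ha : (0:ℝ) < -x.1 := by linarith
          have hb : (0:ℝ) < -x.2.1 := by linarith
          have hc : (0:ℝ) < -x.2.2 := by linarith
          rw [← Real.log_mul (by positivity) (by positivity),
            ← Real.log_mul (by positivity) (by positivity)]
          apply Real.log_pos
          simp only [P] at h1; nlinarith
        · have ha : (0:ℝ) < -x.1 := by linarith
          have hb : (0:ℝ) < -x.2.1 := by linarith
          have hc : (0:ℝ) < -x.2.2 := by linarith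
          dsimp only
          rw [Real.exp_log ha, Real.exp_log hb, Real.exp_log hc, neg_neg, neg_neg, neg_neg]
    show IsPathConnected (S 4)
    rw [← himg]
    exact H_pathConnected.image hg

abbrev X := {x : ℝ × ℝ × ℝ // 1 + x.1 * x.2.1 * x.2.2 ≠ 0}

open Classical in
def f (x : X) : Fin 5 :=
  if -1 < P x.1 then 0
  else if x.1.1 < 0 then (if x.1.2.1 < 0 then 4 else 1)
  else if x.1.2.1 < 0 then 2 else 3

lemma mem_S_f (x : X) : x.1 ∈ S (f x) := by
  obtain ⟨⟨a, b, c⟩, hx⟩ := x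
  simp only [f]
  have hP : a * b * c ≠ -1 := by intro h; apply hx; simp [P, h]
  split_ifs with h0 h1 h2 h3
  · simpa [S, P] using h0
  · -- a<0, b<0 : region 4
    have hlt : a * b * c < -1 := lt_of_le_of_ne (not_lt.1 h0) hP
    have hc : c < 0 := by nlinarith [mul_pos (neg_pos.2 h1) (neg_pos.2 h2)]
    exact ⟨hlt, h1, h2, hc⟩
  · -- a<0, ¬b<0 : region 1
    have hlt : a * b * c < -1 := lt_of_le_of_ne (not_lt.1 h0) hP
    have hb0 : b ≠ 0 := by rintro rfl; simp at hlt; linarith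
    have hb : 0 < b := lt_of_le_of_ne (not_lt.1 h2) (Ne.symm hb0)
    have hc : 0 < c := by nlinarith [mul_neg_of_neg_of_pos h1 hb]
    exact ⟨hlt, h1, hb, hc⟩
  · -- ¬a<0, b<0 : region 2
    have hlt : a * b * c < -1 := lt_of_le_of_ne (not_lt.1 h0) hP
    have ha0 : a ≠ 0 := by rintro rfl; simp at hlt; linarith
    have ha : 0 < a := lt_of_le_of_ne (not_lt.1 h1) (Ne.symm ha0)
    have hc : 0 < c := by nlinarith [mul_neg_of_pos_of_neg ha h3]
    exact ⟨hlt, ha, h3, hc⟩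
  · -- ¬a<0, ¬b<0 : region 3
    have hlt : a * b * c < -1 := lt_of_le_of_ne (not_lt.1 h0) hP
    have ha0 : a ≠ 0 := by rintro rfl; simp at hlt; linarith
    have ha : 0 < a := lt_of_le_of_ne (not_lt.1 h1) (Ne.symm ha0)
    have hb0 : b ≠ 0 := by rintro rfl; simp at hlt; linarith
    have hb : 0 < b := lt_of_le_of_ne (not_lt.1 h3) (Ne.symm hb0)
    have hc : c < 0 := by nlinarith [mul_pos ha hb]
    exact ⟨hlt, ha, hb, hc⟩

lemma fiber_eq (i : Fin 5) : f ⁻¹' {i} = Subtype.val ⁻¹' (S i) := by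
  ext x
  simp only [mem_preimage, mem_singleton_iff]
  constructor
  · rintro rfl; exact mem_S_f x
  · intro hx; exact S_disjoint (mem_S_f x) hx

lemma cont_f : Continuous f := by
  rw [continuous_discrete_rng]
  intro i
  rw [fiber_eq]
  exact (isOpen_S i).preimage continuous_subtype_val

lemma S_subset_range (i : Fin 5) : S i ⊆ range (Subtype.val : X → ℝ × ℝ × ℝ) := by
  intro x hx
  rw [Subtype.range_coe_subtype]
  fin_cases i <;> (simp only [S, mem_setOf_eq, P] at hx; simp only [mem_setOf_eq]; intro h)
  · linarith
  all_goals (obtain ⟨h1, -⟩ := hx; linarith)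

lemma fiber_preconnected (i : Fin 5) : IsPreconnected (f ⁻¹' {i}) := by
  rw [fiber_eq]
  have hopen : IsOpen {x : ℝ × ℝ × ℝ | 1 + x.1 * x.2.1 * x.2.2 ≠ 0} :=
    isOpen_ne.preimage (by fun_prop)
  exact (S_pathConnected i).isConnected.isPreconnected.preimage_of_isOpenMap
    Subtype.val_injective hopen.isOpenMap_subtype_val (S_subset_range i)

lemma f_surjective : Function.Surjective f := by
  intro i
  fin_cases i
  · exact ⟨⟨(0, 0, 0), by norm_num⟩, by simp [f, P]⟩
  · refine ⟨⟨(-2, 1, 1), by norm_num⟩, ?_⟩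
    simp only [f, P]; norm_num <;> rfl
  · refine ⟨⟨(1, -2, 1), by norm_num⟩, ?_⟩
    simp only [f, P]; norm_num <;> rfl
  · refine ⟨⟨(1, 1, -2), by norm_num⟩, ?_⟩
    simp only [f, P]; norm_num <;> rfl
  · refine ⟨⟨(-2, -1, -1), by norm_num⟩, ?_⟩
    simp only [f, P]; norm_num <;> rfl

end

end Stmt10Aux

/-- The fixed locus `{x ∈ ℝ³ : 1 + x₁x₂x₃ ≠ 0}` of complex conjugation on the
positive fibration has exactly 5 connected components. -/
theorem stmt10 :
    Nat.card (ConnectedComponents {x : ℝ × ℝ × ℝ // 1 + x.1 * x.2.1 * x.2.2 ≠ 0}) = 5 := by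
  classical
  have hf := Stmt10Aux.cont_f
  have hbij : Function.Bijective hf.connectedComponentsLift := by
    constructor
    · rintro a b hab
      obtain ⟨x, rfl⟩ := ConnectedComponents.surjective_coe a
      obtain ⟨y, rfl⟩ := ConnectedComponents.surjective_coe b
      rw [hf.connectedComponentsLift_apply_coe, hf.connectedComponentsLift_apply_coe] at hab
      have hy : y ∈ Stmt10Aux.f ⁻¹' {Stmt10Aux.f x} := by
        simp [Set.mem_preimage, hab]
      have hx : x ∈ Stmt10Aux.f ⁻¹' {Stmt10Aux.f x} := by simp
      have hyx := (Stmt10Aux.fiber_preconnected (Stmt10Aux.f x)).subset_connectedComponent hx hy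
      exact (ConnectedComponents.coe_eq_coe'.2 hyx).symm
    · intro i
      obtain ⟨x, hx⟩ := Stmt10Aux.f_surjective i
      exact ⟨x, by rw [hf.connectedComponentsLift_apply_coe, hx]⟩
  rw [Nat.card_eq_of_bijective _ hbij]
  simp
end

section
/- Let X = {z ∈ ℂ³ : 1 + z₁z₂z₃ ≠ 0} and f(z) = (log |1 + z₁z₂z₃|, |z₁|² − |z₂|², |z₁|² − |z₃|²). For every p ∈ X at which the Fréchet derivative Df_p : ℂ³ → ℝ³ is surjective, the kernel of Df_p is a 3-dimensional ℝ-linear subspace of ℂ³ ≅ ℝ⁶ on which the standard symplectic form ω of ℂ³ vanishes identically. In other words, the regular fibres of f are Lagrangian. -/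
/-- The complement of `1 + z₁z₂z₃ = 0` in `ℂ³`. -/
def X9 : Set (ℂ × ℂ × ℂ) := {z | 1 + z.1 * z.2.1 * z.2.2 ≠ 0}

/-- The positive fibration
`f(z) = (log |1 + z₁z₂z₃|, |z₁|² − |z₂|², |z₁|² − |z₃|²)`. -/
noncomputable def f9 (z : ℂ × ℂ × ℂ) : ℝ × ℝ × ℝ :=
  (Real.log (‖1 + z.1 * z.2.1 * z.2.2‖),
    ‖z.1‖ ^ 2 - ‖z.2.1‖ ^ 2,
    ‖z.1‖ ^ 2 - ‖z.2.2‖ ^ 2)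

/-- The standard symplectic form on `ℂ³`: `ω(u,v) = ∑ⱼ Im(conj uⱼ · vⱼ)`. -/
def omega3 (u v : ℂ × ℂ × ℂ) : ℝ :=
  ((starRingEnd ℂ) u.1 * v.1).im + ((starRingEnd ℂ) u.2.1 * v.2.1).im +
    ((starRingEnd ℂ) u.2.2 * v.2.2).im

/-!
The three components of `f9` Poisson-commute, so their Hamiltonian vectors `X₁, X₂, X₃` at `p`
are `ω`-orthogonal to each other and hence tangent to the fibre: they lie in `ker Df_p`.
Since `ω(Xᵢ, ·) = d(f9)ᵢ`, surjectivity of `Df_p` makes them linearly independent, and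
`dim ker Df_p = 6 - 3 = 3`, so they span the kernel. Then `ω(Xᵢ, v) = d(f9)ᵢ v = 0` for every
`v` in the kernel.
-/

open Module

section HamiltonianLift

variable {K V W : Type*} [Field K] [AddCommGroup V] [Module K V] [AddCommGroup W] [Module K W]

/-- `T φ` is the Hamiltonian vector of the function `φ ∘ f` when `L = Df`. -/
def IsHamiltonianLift (ω : V → V → K) (L : V →ₗ[K] W) (T : Dual K W →ₗ[K] V) : Prop :=
  ∀ φ v, ω (T φ) v = φ (L v)

variable {ω : V → V → K} {L : V →ₗ[K] W} {T : Dual K W →ₗ[K] V}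

theorem IsHamiltonianLift.injective (hT : IsHamiltonianLift ω L T)
    (hL : Function.Surjective L) : Function.Injective T := by
  refine (injective_iff_map_eq_zero T).2 fun φ hφ => LinearMap.ext fun w => ?_
  obtain ⟨v, rfl⟩ := hL w
  rw [← hT, hφ, ← map_zero T, hT, LinearMap.zero_apply]

theorem finrank_ker_eq_of_surjective [FiniteDimensional K V] (hL : Function.Surjective L)
    (hdim : finrank K V = 2 * finrank K W) : finrank K (LinearMap.ker L) = finrank K W := by
  have := L.finrank_range_add_finrank_ker
  rw [LinearMap.range_eq_top.2 hL, finrank_top] at this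
  omega

theorem IsHamiltonianLift.range_eq_ker [FiniteDimensional K V] (hT : IsHamiltonianLift ω L T)
    (hL : Function.Surjective L) (hLT : L ∘ₗ T = 0) (hdim : finrank K V = 2 * finrank K W) :
    LinearMap.range T = LinearMap.ker L := by
  have : FiniteDimensional K W := Module.Finite.of_surjective L hL
  refine Submodule.eq_of_le_of_finrank_eq ?_ ?_
  · rintro _ ⟨φ, rfl⟩
    exact LinearMap.congr_fun hLT φ
  · rw [LinearMap.finrank_range_of_inj (hT.injective hL), Subspace.dual_finrank_eq,
      finrank_ker_eq_of_surjective hL hdim]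

theorem IsHamiltonianLift.isotropic_ker [FiniteDimensional K V] (hT : IsHamiltonianLift ω L T)
    (hL : Function.Surjective L) (hLT : L ∘ₗ T = 0) (hdim : finrank K V = 2 * finrank K W) :
    ∀ u ∈ LinearMap.ker L, ∀ v ∈ LinearMap.ker L, ω u v = 0 := by
  intro u hu v hv
  rw [← hT.range_eq_ker hL hLT hdim] at hu
  obtain ⟨φ, rfl⟩ := hu
  rw [hT, LinearMap.mem_ker.1 hv, map_zero]

end HamiltonianLift

theorem Module.Dual.apply_prod_three {R : Type*} [CommSemiring R] (φ : Dual R (R × R × R))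
    (w : R × R × R) : φ w = w.1 * φ (1, 0, 0) + w.2.1 * φ (0, 1, 0) + w.2.2 * φ (0, 0, 1) := by
  have hw : w = w.1 • ((1 : R), (0 : R), (0 : R)) + w.2.1 • ((0 : R), (1 : R), (0 : R))
      + w.2.2 • ((0 : R), (0 : R), (1 : R)) := by
    ext <;> simp
  conv_lhs => rw [hw]
  simp only [map_add, map_smul, smul_eq_mul]

theorem Complex.re_div_eq_inner_div (z w : ℂ) : (z / w).re = inner ℝ w z / ‖w‖ ^ 2 := by
  simp only [Complex.div_re, Complex.inner, Complex.sq_norm, Complex.normSq_apply, Complex.mul_re,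
    Complex.conj_re, Complex.conj_im]
  ring

open Complex ComplexConjugate

def hamiltonianVector (h : ℂ × ℂ × ℂ) : ℂ × ℂ × ℂ :=
  (-I * conj h.1, -I * conj h.2.1, -I * conj h.2.2)

theorem omega3_hamiltonianVector (h v : ℂ × ℂ × ℂ) :
    omega3 (hamiltonianVector h) v = (h.1 * v.1 + h.2.1 * v.2.1 + h.2.2 * v.2.2).re := by
  simp only [omega3, hamiltonianVector, map_mul, map_neg, conj_I, conj_conj, neg_neg, mul_im, mul_re,
    I_re, I_im, add_re]
  ring

theorem omega3_self (u : ℂ × ℂ × ℂ) : omega3 u u = 0 := by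
  simp only [omega3, mul_im, conj_re, conj_im]
  ring

theorem omega3_swap (u v : ℂ × ℂ × ℂ) : omega3 v u = -omega3 u v := by
  simp only [omega3, mul_im, conj_re, conj_im]
  ring

theorem omega3_add_left (u u' v : ℂ × ℂ × ℂ) : omega3 (u + u') v = omega3 u v + omega3 u' v := by
  simp only [omega3, Prod.fst_add, Prod.snd_add, map_add, add_mul, add_im]
  ring

theorem omega3_smul_left (r : ℝ) (u v : ℂ × ℂ × ℂ) : omega3 (r • u) v = r * omega3 u v := by
  simp only [omega3, Prod.smul_fst, Prod.smul_snd, real_smul, map_mul, conj_ofReal, mul_assoc,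
    im_ofReal_mul]
  ring

/-! The Hamiltonian vectors at `p` of the three components of `f9`: the differentials are
`Re(dg/g)` with `g = 1 + z₁z₂z₃`, `2 Re(z̄₁ dz₁) - 2 Re(z̄₂ dz₂)` and `2 Re(z̄₁ dz₁) - 2 Re(z̄₃ dz₃)`. -/

noncomputable def f9Ham₁ (p : ℂ × ℂ × ℂ) : ℂ × ℂ × ℂ :=
  let g := 1 + p.1 * p.2.1 * p.2.2
  hamiltonianVector (p.2.1 * p.2.2 / g, p.1 * p.2.2 / g, p.1 * p.2.1 / g)

def f9Ham₂ (p : ℂ × ℂ × ℂ) : ℂ × ℂ × ℂ := hamiltonianVector (2 * conj p.1, -(2 * conj p.2.1), 0)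

def f9Ham₃ (p : ℂ × ℂ × ℂ) : ℂ × ℂ × ℂ := hamiltonianVector (2 * conj p.1, 0, -(2 * conj p.2.2))

theorem omega3_f9Ham₁_f9Ham₂ (p : ℂ × ℂ × ℂ) : omega3 (f9Ham₁ p) (f9Ham₂ p) = 0 := by
  rw [f9Ham₁, omega3_hamiltonianVector]
  simp only [f9Ham₂, hamiltonianVector, map_neg, map_mul, conj_conj, map_ofNat, map_zero]
  ring_nf
  simp

theorem omega3_f9Ham₁_f9Ham₃ (p : ℂ × ℂ × ℂ) : omega3 (f9Ham₁ p) (f9Ham₃ p) = 0 := by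
  rw [f9Ham₁, omega3_hamiltonianVector]
  simp only [f9Ham₃, hamiltonianVector, map_neg, map_mul, conj_conj, map_ofNat, map_zero]
  ring_nf
  simp

theorem omega3_f9Ham₂_f9Ham₃ (p : ℂ × ℂ × ℂ) : omega3 (f9Ham₂ p) (f9Ham₃ p) = 0 := by
  simp only [omega3, f9Ham₂, f9Ham₃, hamiltonianVector, conj_mul', ← ofReal_pow, ofReal_im,
    mul_zero, map_zero, zero_mul, zero_im, add_zero]

-- `‖·‖` is not differentiable at `0`, but `‖·‖ ^ 2` is smooth and has a known derivative.
theorem f9_eq_half_log_norm_sq : f9 = fun z => (2⁻¹ * Real.log (‖1 + z.1 * z.2.1 * z.2.2‖ ^ 2),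
    ‖z.1‖ ^ 2 - ‖z.2.1‖ ^ 2, ‖z.1‖ ^ 2 - ‖z.2.2‖ ^ 2) := by
  funext z
  rw [f9, Real.log_pow]
  push_cast
  ring_nf

theorem fderiv_f9_apply {p : ℂ × ℂ × ℂ} (hp : p ∈ X9) (v : ℂ × ℂ × ℂ) :
    fderiv ℝ f9 p v = (omega3 (f9Ham₁ p) v, omega3 (f9Ham₂ p) v, omega3 (f9Ham₃ p) v) := by
  have hg : HasFDerivAt (𝕜 := ℝ) (fun z : ℂ × ℂ × ℂ => 1 + z.1 * z.2.1 * z.2.2) _ p :=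
    ((hasFDerivAt_fst.mul (hasFDerivAt_fst.comp p hasFDerivAt_snd)).mul
      (hasFDerivAt_snd.comp p hasFDerivAt_snd)).const_add 1
  have hne : ‖1 + p.1 * p.2.1 * p.2.2‖ ^ 2 ≠ 0 := by simpa [X9] using hp
  have h₁ := (hg.norm_sq.log hne).const_mul 2⁻¹
  have h₂ := (hasFDerivAt_fst (p := p)).norm_sq
  have h₃ := ((hasFDerivAt_fst (p := p.2)).comp p hasFDerivAt_snd).norm_sq
  have h₄ := ((hasFDerivAt_snd (p := p.2)).comp p hasFDerivAt_snd).norm_sq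
  have hD : HasFDerivAt (fun z : ℂ × ℂ × ℂ => (2⁻¹ * Real.log (‖1 + z.1 * z.2.1 * z.2.2‖ ^ 2),
      ‖z.1‖ ^ 2 - ‖z.2.1‖ ^ 2, ‖z.1‖ ^ 2 - ‖z.2.2‖ ^ 2)) _ p :=
    h₁.prodMk ((h₂.sub h₃).prodMk (h₂.sub h₄))
  rw [f9_eq_half_log_norm_sq, hD.fderiv]
  simp only [ContinuousLinearMap.prod_apply, smul_apply, ContinuousLinearMap.comp_apply,
    add_apply, sub_apply, coe_innerSL_apply, smul_eq_mul, nsmul_eq_mul, ContinuousLinearMap.coe_fst',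
    ContinuousLinearMap.coe_snd', Pi.mul_apply, Function.comp_apply, f9Ham₁, f9Ham₂, f9Ham₃,
    omega3_hamiltonianVector]
  refine Prod.ext ?_ (Prod.ext ?_ ?_)
  · rw [show p.2.1 * p.2.2 / (1 + p.1 * p.2.1 * p.2.2) * v.1
          + p.1 * p.2.2 / (1 + p.1 * p.2.1 * p.2.2) * v.2.1
          + p.1 * p.2.1 / (1 + p.1 * p.2.1 * p.2.2) * v.2.2
        = (v.1 * p.2.1 * p.2.2 + p.1 * v.2.1 * p.2.2 + p.1 * p.2.1 * v.2.2)
          / (1 + p.1 * p.2.1 * p.2.2) by ring,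
      Complex.re_div_eq_inner_div]
    ring_nf
  all_goals
    simp only [Complex.inner, add_re, neg_mul, neg_re, zero_mul, add_zero, mul_re, mul_im, re_ofNat,
      im_ofNat]
    ring

noncomputable def f9HamiltonianLift (p : ℂ × ℂ × ℂ) : Dual ℝ (ℝ × ℝ × ℝ) →ₗ[ℝ] ℂ × ℂ × ℂ :=
  (LinearMap.toSpanSingleton ℝ _ (f9Ham₁ p)).comp (Dual.eval ℝ _ (1, 0, 0)) +
    (LinearMap.toSpanSingleton ℝ _ (f9Ham₂ p)).comp (Dual.eval ℝ _ (0, 1, 0)) +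
    (LinearMap.toSpanSingleton ℝ _ (f9Ham₃ p)).comp (Dual.eval ℝ _ (0, 0, 1))

theorem f9HamiltonianLift_apply (p : ℂ × ℂ × ℂ) (φ : Dual ℝ (ℝ × ℝ × ℝ)) :
    f9HamiltonianLift p φ =
      φ (1, 0, 0) • f9Ham₁ p + φ (0, 1, 0) • f9Ham₂ p + φ (0, 0, 1) • f9Ham₃ p :=
  rfl

theorem isHamiltonianLift_f9 {p : ℂ × ℂ × ℂ} (hp : p ∈ X9) :
    IsHamiltonianLift omega3 (fderiv ℝ f9 p : ℂ × ℂ × ℂ →ₗ[ℝ] ℝ × ℝ × ℝ) (f9HamiltonianLift p) := by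
  intro φ v
  rw [f9HamiltonianLift_apply, omega3_add_left, omega3_add_left, omega3_smul_left,
    omega3_smul_left, omega3_smul_left, ContinuousLinearMap.coe_coe, fderiv_f9_apply hp]
  conv_rhs => rw [φ.apply_prod_three]
  ring

theorem fderiv_f9_comp_f9HamiltonianLift {p : ℂ × ℂ × ℂ} (hp : p ∈ X9) :
    (fderiv ℝ f9 p : ℂ × ℂ × ℂ →ₗ[ℝ] ℝ × ℝ × ℝ) ∘ₗ f9HamiltonianLift p = 0 := by
  have h₁ : fderiv ℝ f9 p (f9Ham₁ p) = 0 := by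
    rw [fderiv_f9_apply hp, omega3_self, omega3_swap, omega3_swap (f9Ham₁ p),
      omega3_f9Ham₁_f9Ham₂, omega3_f9Ham₁_f9Ham₃, neg_zero]
    rfl
  have h₂ : fderiv ℝ f9 p (f9Ham₂ p) = 0 := by
    rw [fderiv_f9_apply hp, omega3_self, omega3_f9Ham₁_f9Ham₂, omega3_swap,
      omega3_f9Ham₂_f9Ham₃, neg_zero]
    rfl
  have h₃ : fderiv ℝ f9 p (f9Ham₃ p) = 0 := by
    rw [fderiv_f9_apply hp, omega3_self, omega3_f9Ham₁_f9Ham₃, omega3_f9Ham₂_f9Ham₃]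
    rfl
  ext φ : 1
  simp [f9HamiltonianLift_apply, h₁, h₂, h₃]

/-- The regular fibres of the positive fibration are Lagrangian: at every `p ∈ X9`
where `Df_p` is surjective, its kernel is 3-dimensional and `ω` vanishes on it. -/
theorem stmt11 :
    ∀ p ∈ X9, Function.Surjective (fderiv ℝ f9 p) →
      Module.finrank ℝ ↥(LinearMap.ker (fderiv ℝ f9 p : ℂ × ℂ × ℂ →ₗ[ℝ] ℝ × ℝ × ℝ)) = 3 ∧
      ∀ u ∈ LinearMap.ker (fderiv ℝ f9 p : ℂ × ℂ × ℂ →ₗ[ℝ] ℝ × ℝ × ℝ), ∀ v ∈ LinearMap.ker (fderiv ℝ f9 p : ℂ × ℂ × ℂ →ₗ[ℝ] ℝ × ℝ × ℝ),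
        omega3 u v = 0 := by
  intro p hp hsurj
  have hT := isHamiltonianLift_f9 hp
  have hLT := fderiv_f9_comp_f9HamiltonianLift hp
  have hdim : finrank ℝ (ℂ × ℂ × ℂ) = 2 * finrank ℝ (ℝ × ℝ × ℝ) := by
    simp [finrank_prod, Complex.finrank_real_complex]
  refine ⟨?_, hT.isotropic_ker hsurj hLT hdim⟩
  rw [finrank_ker_eq_of_surjective hsurj hdim]
  simp [finrank_prod]
end

section
/- Let F : ℂ³ → ℝ³ be the Harvey–Lawson map F(z₁,z₂,z₃) = (Im(z₁z₂z₃), |z₁|² − |z₂|², |z₁|² − |z₃|²). For every z ∈ ℂ³, the Fréchet derivative DF_z : ℂ³ → ℝ³ (an ℝ-linear map on ℂ³ ≅ ℝ⁶) fails to be surjective if and only if at least two of the coordinates z₁, z₂, z₃ are zero. Hence the critical locus of F is Crit(F) = ⋃_{i≠j} {z : z_i = z_j = 0}. -/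
/-- The Harvey–Lawson map `F(z) = (Im(z₁z₂z₃), |z₁|² − |z₂|², |z₁|² − |z₃|²)`. -/
noncomputable def F12 (z : ℂ × ℂ × ℂ) : ℝ × ℝ × ℝ :=
  ((z.1 * z.2.1 * z.2.2).im,
    ‖z.1‖ ^ 2 - ‖z.2.1‖ ^ 2,
    ‖z.1‖ ^ 2 - ‖z.2.2‖ ^ 2)

/-!
If two coordinates vanish, every monomial of the first component of `DF_z` contains one of them,
so that component is identically zero. Otherwise `Q = |z₂z₃|² + |z₁z₃|² + |z₁z₂|² > 0`, and the
direction `(i / Q) · conj (z₂z₃, z₁z₃, z₁z₂)` is sent to `(1, 0, 0)`. The radial directions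
`(s z₁, t z₂, r z₃)` reach every value of the last two components: the resulting real linear system
has the `2 × 2` minors `|z₁z₂|²`, `|z₁z₃|²`, `|z₂z₃|²`.
-/

open Complex ComplexConjugate

theorem LinearMap.surjective_of_snd_comp_surjective {R M N : Type*} [Ring R]
    [AddCommGroup M] [Module R M] [AddCommGroup N] [Module R N] (f : M →ₗ[R] R × N)
    {m₀ : M} (hm₀ : f m₀ = (1, 0)) (hf : Function.Surjective ((LinearMap.snd R R N).comp f)) :
    Function.Surjective f := by
  rintro ⟨r, n⟩
  obtain ⟨m, hm⟩ := hf n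
  refine ⟨m + (r - (f m).1) • m₀, ?_⟩
  simp_all [Prod.ext_iff]

theorem exists_mul_sub_mul_eq {K : Type*} [Field K] {p q r : K} (h : q * r + p * r + p * q ≠ 0)
    (y w : K) : ∃ s t u : K, p * s - q * t = y ∧ p * s - r * u = w := by
  refine ⟨(r * y + q * w) / (q * r + p * r + p * q),
    (p * w - p * y - r * y) / (q * r + p * r + p * q),
    (p * y - p * w - q * w) / (q * r + p * r + p * q), ?_, ?_⟩ <;>
  rw [mul_div_assoc', mul_div_assoc', div_sub_div_same, div_eq_iff h] <;> ring

/-- `‖(z₂z₃, z₁z₃, z₁z₂)‖²`, the squared norm of the complex gradient of `z₁z₂z₃`. -/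
noncomputable def gradProdNormSq (a b c : ℂ) : ℝ :=
  normSq b * normSq c + normSq a * normSq c + normSq a * normSq b

theorem gradProdNormSq_ne_zero {a b c : ℂ}
    (h : ¬((a = 0 ∧ b = 0) ∨ (a = 0 ∧ c = 0) ∨ (b = 0 ∧ c = 0))) :
    gradProdNormSq a b c ≠ 0 := by
  intro hQ
  apply h
  have := normSq_nonneg a
  have := normSq_nonneg b
  have := normSq_nonneg c
  rw [gradProdNormSq, add_eq_zero_iff_of_nonneg (by positivity) (by positivity),
    add_eq_zero_iff_of_nonneg (by positivity) (by positivity)] at hQ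
  simp only [mul_eq_zero, normSq_eq_zero] at hQ
  tauto

theorem fderiv_F12_apply (a b c u v w : ℂ) :
    fderiv ℝ F12 (a, b, c) (u, v, w) =
      ((u * b * c + a * v * c + a * b * w).im,
        2 * (u * conj a).re - 2 * (v * conj b).re,
        2 * (u * conj a).re - 2 * (w * conj c).re) := by
  have hp : HasFDerivAt (fun z : ℂ × ℂ × ℂ => (z.1 * z.2.1 * z.2.2).im) _ (a, b, c) :=
    imCLM.hasFDerivAt.comp _ ((hasFDerivAt_fst.mul hasFDerivAt_snd.fst).mul hasFDerivAt_snd.snd)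
  have h₁ : HasFDerivAt (fun z : ℂ × ℂ × ℂ => ‖z.1‖ ^ 2) _ (a, b, c) := hasFDerivAt_fst.norm_sq
  have h₂ : HasFDerivAt (fun z : ℂ × ℂ × ℂ => ‖z.2.1‖ ^ 2) _ (a, b, c) :=
    hasFDerivAt_snd.fst.norm_sq
  have h₃ : HasFDerivAt (fun z : ℂ × ℂ × ℂ => ‖z.2.2‖ ^ 2) _ (a, b, c) :=
    hasFDerivAt_snd.snd.norm_sq
  have hF : HasFDerivAt F12 _ (a, b, c) := hp.prodMk ((h₁.sub h₂).prodMk (h₁.sub h₃))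
  rw [hF.fderiv]
  refine Prod.ext ?_ (Prod.ext ?_ ?_) <;> simp [Complex.inner] <;> ring

theorem fst_fderiv_F12_apply_eq_zero {a b c : ℂ}
    (h : (a = 0 ∧ b = 0) ∨ (a = 0 ∧ c = 0) ∨ (b = 0 ∧ c = 0)) (u v w : ℂ) :
    (fderiv ℝ F12 (a, b, c) (u, v, w)).1 = 0 := by
  rcases h with ⟨rfl, rfl⟩ | ⟨rfl, rfl⟩ | ⟨rfl, rfl⟩ <;> simp [fderiv_F12_apply]

theorem snd_fderiv_F12_apply_real_mul (a b c : ℂ) (s t r : ℝ) :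
    (fderiv ℝ F12 (a, b, c) (s * a, t * b, r * c)).2 =
      (2 * (normSq a * s - normSq b * t), 2 * (normSq a * s - normSq c * r)) := by
  simp only [fderiv_F12_apply, mul_assoc, mul_conj, ← ofReal_mul, ofReal_re]
  ring_nf

theorem fderiv_F12_apply_I_div_mul_conj {a b c : ℂ} (hQ : gradProdNormSq a b c ≠ 0) :
    fderiv ℝ F12 (a, b, c)
      (I / gradProdNormSq a b c * conj (b * c), I / gradProdNormSq a b c * conj (a * c),
        I / gradProdNormSq a b c * conj (a * b)) = (1, 0, 0) := by
  set k : ℂ := I / gradProdNormSq a b c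
  have hfst : k * conj (b * c) * b * c + a * (k * conj (a * c)) * c + a * b * (k * conj (a * b))
      = I := calc
    _ = k * ((b * c) * conj (b * c) + (a * c) * conj (a * c) + (a * b) * conj (a * b)) := by ring
    _ = k * gradProdNormSq a b c := by
      simp only [mul_conj, normSq_mul, gradProdNormSq]
      push_cast
      ring
    _ = I := div_mul_cancel₀ I (ofReal_ne_zero.2 hQ)
  have ha : k * conj (b * c) * conj a = k * conj (a * b * c) := by simp only [map_mul]; ring
  have hb : k * conj (a * c) * conj b = k * conj (a * b * c) := by simp only [map_mul]; ring
  have hc : k * conj (a * b) * conj c = k * conj (a * b * c) := by simp only [map_mul]; ring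
  rw [fderiv_F12_apply, hfst, ha, hb, hc]
  simp

theorem surjective_fderiv_F12 {a b c : ℂ} (hQ : gradProdNormSq a b c ≠ 0) :
    Function.Surjective (fderiv ℝ F12 (a, b, c)) := by
  refine LinearMap.surjective_of_snd_comp_surjective (fderiv ℝ F12 (a, b, c)).toLinearMap
    (fderiv_F12_apply_I_div_mul_conj hQ) ?_
  rintro ⟨y, w⟩
  obtain ⟨s, t, r, hy, hw⟩ := exists_mul_sub_mul_eq hQ (y / 2) (w / 2)
  refine ⟨(s * a, t * b, r * c), ?_⟩
  simp only [LinearMap.comp_apply, LinearMap.snd_apply, ContinuousLinearMap.coe_coe,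
    snd_fderiv_F12_apply_real_mul, hy, hw]
  ring_nf

/-- The critical locus of the Harvey–Lawson fibration: `DF_z` fails to be surjective
exactly when at least two of the coordinates vanish. -/
theorem stmt12 :
    ∀ z : ℂ × ℂ × ℂ,
      ¬ Function.Surjective (fderiv ℝ F12 z) ↔
        (z.1 = 0 ∧ z.2.1 = 0) ∨ (z.1 = 0 ∧ z.2.2 = 0) ∨ (z.2.1 = 0 ∧ z.2.2 = 0) := by
  rintro ⟨a, b, c⟩
  refine ⟨fun h => ?_, fun h hsurj => ?_⟩
  · by_contra hz
    exact h (surjective_fderiv_F12 (gradProdNormSq_ne_zero hz))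
  · obtain ⟨⟨u, v, w⟩, huvw⟩ := hsurj (1, 0, 0)
    simpa [fst_fderiv_F12_apply_eq_zero h] using congrArg Prod.fst huvw
end

section
/- Let F : ℂ³ → ℝ³ be the Harvey–Lawson map F(z₁,z₂,z₃) = (Im(z₁z₂z₃), |z₁|² − |z₂|², |z₁|² − |z₃|²). The map ι(z₁,z₂,z₃) = (−conj z₁, conj z₂, conj z₃) satisfies F ∘ ι = F and ι ∘ ι = id, and negates the standard symplectic form on ℂ³: ω(ι(u), ι(v)) = −ω(u,v) for all u,v ∈ ℂ³. Hence ι is a fibre-preserving anti-symplectic involution of the Harvey–Lawson fibration. -/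
/-- The map `ι(z₁,z₂,z₃) = (−conj z₁, conj z₂, conj z₃)`. -/
def iota13 (z : ℂ × ℂ × ℂ) : ℂ × ℂ × ℂ :=
  (-(starRingEnd ℂ) z.1, (starRingEnd ℂ) z.2.1, (starRingEnd ℂ) z.2.2)

open ComplexConjugate

/-- Complex conjugation is anti-symplectic on each factor `ℂ`. -/
theorem Complex.im_conj_conj_mul_conj (a b : ℂ) :
    (conj (conj a) * conj b).im = -(conj a * b).im := by
  rw [← map_mul, Complex.conj_im]

theorem F12_iota13 (z : ℂ × ℂ × ℂ) : F12 (iota13 z) = F12 z := by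
  have hIm : (-conj z.1 * conj z.2.1 * conj z.2.2).im = (z.1 * z.2.1 * z.2.2).im := by
    rw [neg_mul, neg_mul, Complex.neg_im, ← map_mul, ← map_mul, Complex.conj_im, neg_neg]
  simp only [F12, iota13, hIm, norm_neg, Complex.norm_conj]

theorem iota13_involutive : Function.Involutive iota13 := fun z => by
  simp only [iota13, map_neg, Complex.conj_conj, neg_neg]

theorem omega3_iota13 (u v : ℂ × ℂ × ℂ) : omega3 (iota13 u) (iota13 v) = -omega3 u v := by
  simp only [omega3, iota13, map_neg, neg_mul_neg, Complex.im_conj_conj_mul_conj]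
  ring

/-- `ι` is a fibre-preserving anti-symplectic involution of the Harvey–Lawson
fibration. -/
theorem stmt13 :
    (∀ z : ℂ × ℂ × ℂ, F12 (iota13 z) = F12 z) ∧
    (∀ z : ℂ × ℂ × ℂ, iota13 (iota13 z) = z) ∧
    (∀ u v : ℂ × ℂ × ℂ, omega3 (iota13 u) (iota13 v) = - omega3 u v) :=
  ⟨F12_iota13, iota13_involutive, omega3_iota13⟩
end

section
/- Let F : ℂ³ → ℝ³ be the Harvey–Lawson map F(z₁,z₂,z₃) = (Im(z₁z₂z₃), |z₁|² − |z₂|², |z₁|² − |z₃|²). For every z ∈ ℂ³ at which the Fréchet derivative DF_z : ℂ³ → ℝ³ is surjective, the kernel of DF_z is a 3-dimensional ℝ-linear subspace of ℂ³ ≅ ℝ⁶ on which the standard symplectic form ω of ℂ³ vanishes identically. In other words, the regular fibres of the Harvey–Lawson fibration are Lagrangian. -/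
/-!
The three components of `F` Poisson-commute. Hence, for each covector `ξ` on `ℝ³`, the
Hamiltonian vector field `X_ξ` of `ξ ∘ F` (characterised by `ω(X_ξ, ·) = ξ ∘ DF_z`) lies in
`ker DF_z`. When `DF_z` is onto, `ξ ↦ X_ξ` is injective, so these fields span a 3-dimensional
subspace of the 3-dimensional kernel, i.e. all of it; and `ω(X_ξ, v) = ξ(DF_z v) = 0` for
`v ∈ ker DF_z`.
-/

open Module Complex ComplexConjugate

section Isotropic

variable {K V W : Type*} [Field K] [AddCommGroup V] [Module K V] [AddCommGroup W] [Module K W]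
  {D : V →ₗ[K] W} {H : Dual K W →ₗ[K] V} {ω : V → V → K}

theorem LinearMap.injective_of_pairing_eq_comp (hD : Function.Surjective D)
    (hωH : ∀ ξ v, ω (H ξ) v = ξ (D v)) : Function.Injective H := by
  refine (injective_iff_map_eq_zero H).2 fun ξ hξ ↦ LinearMap.ext fun w ↦ ?_
  obtain ⟨v, rfl⟩ := hD w
  rw [← hωH, hξ, ← H.map_zero, hωH, LinearMap.zero_apply]

variable [FiniteDimensional K V]

theorem LinearMap.finrank_ker_of_surjective (hD : Function.Surjective D) :
    finrank K (LinearMap.ker D) = finrank K V - finrank K W := by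
  have h := D.finrank_range_add_finrank_ker
  rw [LinearMap.range_eq_top.2 hD, finrank_top] at h
  omega

theorem LinearMap.range_eq_ker_of_pairing_eq_comp (hD : Function.Surjective D)
    (hdim : finrank K V = 2 * finrank K W) (hωH : ∀ ξ v, ω (H ξ) v = ξ (D v))
    (hDH : ∀ ξ, D (H ξ) = 0) : LinearMap.range H = LinearMap.ker D := by
  refine Submodule.eq_of_le_of_finrank_eq (LinearMap.range_le_ker_iff.2 (LinearMap.ext hDH)) ?_
  rw [LinearMap.finrank_range_of_inj (injective_of_pairing_eq_comp hD hωH),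
    Subspace.dual_finrank_eq, finrank_ker_of_surjective hD]
  omega

theorem LinearMap.isotropic_ker_of_pairing_eq_comp (hD : Function.Surjective D)
    (hdim : finrank K V = 2 * finrank K W) (hωH : ∀ ξ v, ω (H ξ) v = ξ (D v))
    (hDH : ∀ ξ, D (H ξ) = 0) : ∀ u ∈ LinearMap.ker D, ∀ v ∈ LinearMap.ker D, ω u v = 0 := by
  intro u hu v hv
  rw [← range_eq_ker_of_pairing_eq_comp hD hdim hωH hDH] at hu
  obtain ⟨ξ, rfl⟩ := hu
  rw [hωH, LinearMap.mem_ker.1 hv, map_zero]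

end Isotropic

theorem LinearMap.map_prod_three {R M : Type*} [CommSemiring R] [AddCommMonoid M] [Module R M]
    (f : R × R × R →ₗ[R] M) (a b c : R) :
    f (a, b, c) = a • f (1, 0, 0) + b • f (0, 1, 0) + c • f (0, 0, 1) := by
  rw [← map_smul, ← map_smul, ← map_smul, ← map_add, ← map_add]
  simp

theorem fderiv_F12_apply_s14 (z v : ℂ × ℂ × ℂ) :
    fderiv ℝ F12 z v =
      ((v.1 * z.2.1 * z.2.2 + z.1 * v.2.1 * z.2.2 + z.1 * z.2.1 * v.2.2).im,
        2 * (conj z.1 * v.1).re - 2 * (conj z.2.1 * v.2.1).re,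
        2 * (conj z.1 * v.1).re - 2 * (conj z.2.2 * v.2.2).re) := by
  have h₁ : HasFDerivAt (fun z : ℂ × ℂ × ℂ ↦ z.1) (ContinuousLinearMap.fst ℝ ℂ (ℂ × ℂ)) z :=
    hasFDerivAt_fst
  have h₂ : HasFDerivAt (fun z : ℂ × ℂ × ℂ ↦ z.2.1)
      ((ContinuousLinearMap.fst ℝ ℂ ℂ).comp (ContinuousLinearMap.snd ℝ ℂ (ℂ × ℂ))) z :=
    hasFDerivAt_fst.comp z hasFDerivAt_snd
  have h₃ : HasFDerivAt (fun z : ℂ × ℂ × ℂ ↦ z.2.2)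
      ((ContinuousLinearMap.snd ℝ ℂ ℂ).comp (ContinuousLinearMap.snd ℝ ℂ (ℂ × ℂ))) z :=
    hasFDerivAt_snd.comp z hasFDerivAt_snd
  have hF : HasFDerivAt F12 _ z := (imCLM.hasFDerivAt.comp z ((h₁.mul h₂).mul h₃)).prodMk
    ((h₁.norm_sq.sub h₂.norm_sq).prodMk (h₁.norm_sq.sub h₃.norm_sq))
  rw [hF.fderiv]
  simp only [Pi.mul_apply, smul_add, ContinuousLinearMap.comp_add, ContinuousLinearMap.prod_apply,
    add_apply, ContinuousLinearMap.comp_apply, smul_apply,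
    ContinuousLinearMap.coe_snd', smul_eq_mul, imCLM_apply, mul_im, mul_re,
    ContinuousLinearMap.coe_fst', sub_apply, coe_innerSL_apply, Complex.inner,
    conj_re, conj_im, mul_neg, sub_neg_eq_add, nsmul_eq_mul, Nat.cast_ofNat, add_im, neg_mul,
    Prod.mk.injEq]
  exact ⟨by ring, by ring, by ring⟩

/-- `ξ ↦ X_ξ`, the Hamiltonian vector field at `z` of the function `ξ ∘ F12`. -/
noncomputable def hamiltonianF12 (z : ℂ × ℂ × ℂ) : Dual ℝ (ℝ × ℝ × ℝ) →ₗ[ℝ] ℂ × ℂ × ℂ :=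
  (Dual.eval ℝ _ (1, 0, 0)).smulRight (conj (z.2.1 * z.2.2), conj (z.1 * z.2.2), conj (z.1 * z.2.1)) +
  (Dual.eval ℝ _ (0, 1, 0)).smulRight (-(2 * I * z.1), 2 * I * z.2.1, 0) +
  (Dual.eval ℝ _ (0, 0, 1)).smulRight (-(2 * I * z.1), 0, 2 * I * z.2.2)

theorem omega3_hamiltonianF12 (z : ℂ × ℂ × ℂ) (ξ : Dual ℝ (ℝ × ℝ × ℝ)) (v : ℂ × ℂ × ℂ) :
    omega3 (hamiltonianF12 z ξ) v = ξ (fderiv ℝ F12 z v) := by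
  rw [fderiv_F12_apply_s14, ξ.map_prod_three]
  simp only [omega3, hamiltonianF12, map_mul, LinearMap.add_apply, LinearMap.coe_smulRight,
    Dual.eval_apply, Prod.smul_mk, real_smul, smul_neg, smul_zero, Prod.mk_add_mk, add_zero,
    map_add, conj_ofReal, RingHomCompTriple.comp_apply, RingHom.id_apply, map_neg, conj_I, mul_neg,
    neg_mul, neg_neg, mul_im, add_re, mul_re, ofReal_re, ofReal_im, zero_mul, sub_zero, conj_re,
    re_ofNat, I_re, mul_zero, conj_im, im_ofNat, neg_zero, I_im, mul_one, sub_self, sub_neg_eq_add,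
    zero_add, add_im, neg_re, neg_im, smul_eq_mul]
  ring

theorem fderiv_F12_hamiltonianF12 (z : ℂ × ℂ × ℂ) (ξ : Dual ℝ (ℝ × ℝ × ℝ)) :
    fderiv ℝ F12 z (hamiltonianF12 z ξ) = 0 := by
  rw [fderiv_F12_apply_s14]
  simp only [hamiltonianF12, map_mul, LinearMap.add_apply, LinearMap.coe_smulRight,
    Dual.eval_apply, Prod.smul_mk, real_smul, smul_neg, smul_zero, Prod.mk_add_mk, add_zero, add_im,
    mul_im, mul_re, add_re, ofReal_re, conj_re, conj_im, mul_neg, neg_mul, neg_neg, ofReal_im,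
    zero_mul, sub_zero, neg_re, re_ofNat, I_re, mul_zero, im_ofNat, I_im, mul_one, sub_self,
    zero_sub, zero_add, neg_im, neg_zero, sub_neg_eq_add, Prod.ext_iff, Prod.fst_zero,
    Prod.snd_zero]
  exact ⟨by ring, by ring, by ring⟩

/-- The regular fibres of the Harvey–Lawson fibration are Lagrangian: wherever
`DF_z` is surjective, its kernel is 3-dimensional and `ω` vanishes on it. -/
theorem stmt14 :
    ∀ z : ℂ × ℂ × ℂ, Function.Surjective (fderiv ℝ F12 z) →
      Module.finrank ℝ ↥(LinearMap.ker (fderiv ℝ F12 z : ℂ × ℂ × ℂ →ₗ[ℝ] ℝ × ℝ × ℝ)) = 3 ∧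
      ∀ u ∈ LinearMap.ker (fderiv ℝ F12 z : ℂ × ℂ × ℂ →ₗ[ℝ] ℝ × ℝ × ℝ),
        ∀ v ∈ LinearMap.ker (fderiv ℝ F12 z : ℂ × ℂ × ℂ →ₗ[ℝ] ℝ × ℝ × ℝ),
        omega3 u v = 0 := by
  intro z hD
  have hdim : finrank ℝ (ℂ × ℂ × ℂ) = 2 * finrank ℝ (ℝ × ℝ × ℝ) := by
    simp [finrank_prod, finrank_real_complex]
  refine ⟨?_, LinearMap.isotropic_ker_of_pairing_eq_comp hD hdim
    (omega3_hamiltonianF12 z) (fderiv_F12_hamiltonianF12 z)⟩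
  rw [LinearMap.finrank_ker_of_surjective hD]
  simp [finrank_prod, finrank_real_complex]
end

section
/- Define γ : ℂ² → ℂ by γ(z₁,z₂) = z₁z₂/|z₁| when |z₁| ≥ |z₂| (with γ(0,0) = 0) and γ(z₁,z₂) = z₁z₂/|z₂| when |z₁| < |z₂|. Then: (i) γ is continuous on all of ℂ²; (ii) |γ(z₁,z₂)| = min(|z₁|, |z₂|) for all (z₁,z₂); (iii) γ is invariant under the S¹ action: γ(e^{iθ}·z₁, e^{−iθ}·z₂) = γ(z₁,z₂) for all θ ∈ ℝ; and (iv) γ commutes with conjugation: γ(conj z₁, conj z₂) = conj(γ(z₁,z₂)). -/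
/-!
The two branches of `γ` glue to the single formula `γ z = z₁ z₂ / ‖z‖`, where `‖z‖ = max ‖z₁‖ ‖z₂‖`
is the sup norm of `ℂ × ℂ`. Hence `‖γ z‖ = min ‖z₁‖ ‖z₂‖` by `min a b * max a b = a * b`, and `γ`
is continuous: a quotient of continuous functions away from `0`, squeezed by `‖γ z‖ ≤ ‖z‖` near `0`.
-/

/-- The `S¹`-invariant piecewise smooth map `γ(z₁,z₂) = z₁z₂/|z₁|` for `|z₁| ≥ |z₂|`
and `z₁z₂/|z₂|` for `|z₁| < |z₂|` (division by zero yields `0`, so `γ(0,0) = 0`). -/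
noncomputable def gam (z : ℂ × ℂ) : ℂ :=
  if ‖z.2‖ ≤ ‖z.1‖ then z.1 * z.2 / (‖z.1‖ : ℂ)
  else z.1 * z.2 / (‖z.2‖ : ℂ)

lemma gam_eq_mul_div_norm (z : ℂ × ℂ) : gam z = z.1 * z.2 / (‖z‖ : ℂ) := by
  rw [gam, Prod.norm_def]
  split_ifs with h
  · rw [max_eq_left h]
  · rw [max_eq_right (not_le.1 h).le]

lemma norm_gam (z : ℂ × ℂ) : ‖gam z‖ = min ‖z.1‖ ‖z.2‖ := by
  rcases eq_or_ne z 0 with rfl | hz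
  · simp [gam]
  have hpos : 0 < ‖z‖ := norm_pos_iff.2 hz
  rw [gam_eq_mul_div_norm, norm_div, norm_mul, Complex.norm_real, Real.norm_of_nonneg hpos.le,
    div_eq_iff hpos.ne', Prod.norm_def, min_mul_max]

lemma norm_gam_le (z : ℂ × ℂ) : ‖gam z‖ ≤ ‖z‖ :=
  (norm_gam z).trans_le ((min_le_left _ _).trans (norm_fst_le z))

lemma continuousAt_gam_zero : ContinuousAt gam 0 := by
  have hgam0 : gam 0 = 0 := by simp [gam]
  rw [ContinuousAt, hgam0, tendsto_zero_iff_norm_tendsto_zero]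
  exact squeeze_zero (fun _ => norm_nonneg _) norm_gam_le (continuous_norm.tendsto' 0 0 norm_zero)

lemma continuousAt_gam_of_ne_zero {z : ℂ × ℂ} (hz : z ≠ 0) : ContinuousAt gam z := by
  rw [show gam = fun w => w.1 * w.2 / (‖w‖ : ℂ) from funext gam_eq_mul_div_norm]
  refine (continuous_fst.mul continuous_snd).continuousAt.div
    (Complex.continuous_ofReal.comp continuous_norm).continuousAt ?_
  exact_mod_cast norm_ne_zero_iff.2 hz

lemma continuous_gam : Continuous gam :=
  continuous_iff_continuousAt.2 fun z => by
    rcases eq_or_ne z 0 with rfl | hz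
    · exact continuousAt_gam_zero
    · exact continuousAt_gam_of_ne_zero hz

lemma gam_mul_mul {u v : ℂ} (hu : ‖u‖ = 1) (hv : ‖v‖ = 1) (z : ℂ × ℂ) :
    gam (u * z.1, v * z.2) = u * v * gam z := by
  simp only [gam, norm_mul, hu, hv, one_mul]
  split_ifs <;> ring

lemma gam_conj (z : ℂ × ℂ) :
    gam ((starRingEnd ℂ) z.1, (starRingEnd ℂ) z.2) = (starRingEnd ℂ) (gam z) := by
  simp only [gam, Complex.norm_conj]
  split_ifs <;> simp only [map_div₀, map_mul, Complex.conj_ofReal]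

/-- `γ` is continuous, `|γ| = min(|z₁|,|z₂|)`, `γ` is `S¹`-invariant, and
`γ` commutes with complex conjugation. -/
theorem stmt16 :
    Continuous gam ∧
    (∀ z : ℂ × ℂ, ‖(gam z)‖ = min (‖z.1‖) (‖z.2‖)) ∧
    (∀ θ : ℝ, ∀ z : ℂ × ℂ,
      gam (Complex.exp (Complex.I * (θ : ℂ)) * z.1,
           Complex.exp (-(Complex.I * (θ : ℂ))) * z.2) = gam z) ∧
    (∀ z : ℂ × ℂ, gam ((starRingEnd ℂ) z.1, (starRingEnd ℂ) z.2)
        = (starRingEnd ℂ) (gam z)) := by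
  refine ⟨continuous_gam, norm_gam, fun θ z => ?_, gam_conj⟩
  have hneg : ‖Complex.exp (-(Complex.I * θ))‖ = 1 := by
    rw [← mul_neg, ← Complex.ofReal_neg, Complex.norm_exp_I_mul_ofReal]
  rw [gam_mul_mul (Complex.norm_exp_I_mul_ofReal θ) hneg, ← Complex.exp_add, add_neg_cancel,
    Complex.exp_zero, one_mul]
end
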